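/- Let y ∈ M_k and n ∈ ℕ. Then the block-diagonal matrix y ⊗ 1_n ∈ M_n(M_k) satisfies ‖y ⊗ 1_n‖_{p,n} ≤ ‖y‖_p (Schatten p-norm). -/

import Mathlib

open Matrix Kronecker ComplexOrder

/-- Schatten `p`-norm of a complex `k × k` matrix: `(∑ sᵢ^p)^(1/p)` where `sᵢ` are the
singular values (square roots of the eigenvalues of `aᴴ * a`). -/
noncomputable def sNorm (p : ℝ) {k : ℕ} (a : Matrix (Fin k) (Fin k) ℂ) : ℝ :=
  (∑ i, Real.sqrt ((Matrix.posSemidef_conjTranspose_mul_self a).1.eigenvalues i) ^ p) ^ (1 / p)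

/-- The block-matrix norm `‖x‖_{p,n}` on `M_n(M_k)` (modeled as matrices indexed by
`Fin k × Fin n`): infimum of `(1/2)(‖f‖_p + ‖g‖_p)` over positive semidefinite `f, g ∈ M_k`
such that `[[f ⊗ 1ₙ, x], [xᴴ, g ⊗ 1ₙ]]` is positive semidefinite. -/
noncomputable def blockNorm (p : ℝ) {k n : ℕ}
    (x : Matrix (Fin k × Fin n) (Fin k × Fin n) ℂ) : ℝ :=
  sInf { r : ℝ | ∃ f g : Matrix (Fin k) (Fin k) ℂ, f.PosSemidef ∧ g.PosSemidef ∧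
    (Matrix.fromBlocks (f ⊗ₖ (1 : Matrix (Fin n) (Fin n) ℂ)) x
      xᴴ (g ⊗ₖ (1 : Matrix (Fin n) (Fin n) ℂ))).PosSemidef ∧
    r = (1 / 2) * (sNorm p f + sNorm p g) }

/-!
Take `f = |yᴴ| = √(y yᴴ)` and `g = |y| = √(yᴴ y)`. For the self-adjoint dilation
`Y = [[0, y], [yᴴ, 0]]` one has `|Y| = [[f, 0], [0, g]]`, so `[[f, y], [yᴴ, g]] = |Y| + Y = 2 Y⁺ ≥ 0`,
and tensoring with `1ₙ` preserves positivity. Finally `f` and `g` have the same singular values as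
`y`, because `y yᴴ` and `yᴴ y` have the same characteristic polynomial.
-/

open scoped MatrixOrder

namespace Matrix

variable {α : Type*} {l m n p : Type*}

lemma fromBlocks_kronecker_eq_submatrix [Mul α] (A : Matrix l l α) (B : Matrix l m α)
    (C : Matrix m l α) (D : Matrix m m α) (M : Matrix n p α) :
    fromBlocks (A ⊗ₖ M) (B ⊗ₖ M) (C ⊗ₖ M) (D ⊗ₖ M)
      = (fromBlocks A B C D ⊗ₖ M).submatrix (Equiv.sumProdDistrib l m n).symm
          (Equiv.sumProdDistrib l m p).symm := by
  ext (⟨i, a⟩ | ⟨i, a⟩) (⟨j, b⟩ | ⟨j, b⟩) <;> rfl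

variable [Fintype m] [Fintype n] [DecidableEq m] [DecidableEq n]

lemma PosSemidef.fromBlocks_zero {A : Matrix m m ℂ} {B : Matrix n n ℂ}
    (hA : A.PosSemidef) (hB : B.PosSemidef) : (fromBlocks A 0 0 B).PosSemidef := by
  obtain ⟨a, rfl⟩ := CStarAlgebra.nonneg_iff_eq_star_mul_self.mp hA.nonneg
  obtain ⟨b, rfl⟩ := CStarAlgebra.nonneg_iff_eq_star_mul_self.mp hB.nonneg
  simpa [star_eq_conjTranspose, fromBlocks_conjTranspose, fromBlocks_multiply] using
    posSemidef_conjTranspose_mul_self (fromBlocks a 0 0 b)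

lemma posSemidef_fromBlocks_sqrt (y : Matrix m n ℂ) :
    (fromBlocks (CFC.sqrt (y * yᴴ)) y yᴴ (CFC.sqrt (yᴴ * y))).PosSemidef := by
  set Y : Matrix (m ⊕ n) (m ⊕ n) ℂ := fromBlocks 0 y yᴴ 0
  have hY : IsSelfAdjoint Y := by
    simp [Y, IsSelfAdjoint, star_eq_conjTranspose, fromBlocks_conjTranspose]
  have habs : CFC.abs Y = fromBlocks (CFC.sqrt (y * yᴴ)) 0 0 (CFC.sqrt (yᴴ * y)) := by
    refine CFC.sqrt_unique ?_ ?_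
    · simp only [Y, star_eq_conjTranspose, fromBlocks_conjTranspose, fromBlocks_multiply]
      simp [CFC.sqrt_mul_sqrt_self _ (posSemidef_self_mul_conjTranspose y).nonneg,
        CFC.sqrt_mul_sqrt_self _ (posSemidef_conjTranspose_mul_self y).nonneg]
    · exact (PosSemidef.fromBlocks_zero (CFC.sqrt_nonneg _).posSemidef
        (CFC.sqrt_nonneg _).posSemidef).nonneg
  have h : 0 ≤ CFC.abs Y + Y := by
    rw [CFC.abs_add_self Y hY]
    exact smul_nonneg (by norm_num) (CFC.posPart_nonneg Y)
  rw [habs, fromBlocks_add] at h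
  simpa only [add_zero, zero_add] using h.posSemidef

end Matrix

section SchattenNorm

variable (p : ℝ) {k : ℕ}

lemma sNorm_nonneg (a : Matrix (Fin k) (Fin k) ℂ) : 0 ≤ sNorm p a := by
  unfold sNorm
  positivity

lemma sNorm_eq_of_charpoly_eq {a b : Matrix (Fin k) (Fin k) ℂ}
    (h : (aᴴ * a).charpoly = (bᴴ * b).charpoly) : sNorm p a = sNorm p b := by
  unfold sNorm
  rw [(IsHermitian.eigenvalues_eq_eigenvalues_iff _ _).mpr h]

lemma sNorm_conjTranspose (a : Matrix (Fin k) (Fin k) ℂ) : sNorm p aᴴ = sNorm p a :=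
  sNorm_eq_of_charpoly_eq p (by rw [conjTranspose_conjTranspose, charpoly_mul_comm])

lemma sNorm_sqrt_conjTranspose_mul_self (a : Matrix (Fin k) (Fin k) ℂ) :
    sNorm p (CFC.sqrt (aᴴ * a)) = sNorm p a := by
  refine sNorm_eq_of_charpoly_eq p ?_
  rw [(CFC.sqrt_nonneg (aᴴ * a)).posSemidef.1.eq,
    CFC.sqrt_mul_sqrt_self _ (posSemidef_conjTranspose_mul_self a).nonneg]

lemma blockNorm_le {n : ℕ} {x : Matrix (Fin k × Fin n) (Fin k × Fin n) ℂ}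
    {f g : Matrix (Fin k) (Fin k) ℂ} (hf : f.PosSemidef) (hg : g.PosSemidef)
    (hx : (fromBlocks (f ⊗ₖ (1 : Matrix (Fin n) (Fin n) ℂ)) x xᴴ
      (g ⊗ₖ (1 : Matrix (Fin n) (Fin n) ℂ))).PosSemidef) :
    blockNorm p x ≤ (1 / 2) * (sNorm p f + sNorm p g) := by
  refine csInf_le ⟨0, ?_⟩ ⟨f, g, hf, hg, hx, rfl⟩
  rintro _ ⟨f', g', -, -, -, rfl⟩
  exact mul_nonneg (by norm_num) (add_nonneg (sNorm_nonneg p f') (sNorm_nonneg p g'))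

end SchattenNorm

theorem stmt_16_general {k : ℕ} (n : ℕ) (p : ℝ)
    (y : Matrix (Fin k) (Fin k) ℂ) :
    blockNorm p (y ⊗ₖ (1 : Matrix (Fin n) (Fin n) ℂ)) ≤ sNorm p y := by
  have hblock := (posSemidef_fromBlocks_sqrt y).kronecker (PosSemidef.one (n := Fin n))
  calc blockNorm p (y ⊗ₖ (1 : Matrix (Fin n) (Fin n) ℂ))
      ≤ (1 / 2) * (sNorm p (CFC.sqrt (y * yᴴ)) + sNorm p (CFC.sqrt (yᴴ * y))) := by
        refine blockNorm_le p (CFC.sqrt_nonneg _).posSemidef (CFC.sqrt_nonneg _).posSemidef ?_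
        rw [conjTranspose_kronecker, conjTranspose_one, fromBlocks_kronecker_eq_submatrix]
        exact hblock.submatrix _
    _ = sNorm p y := by
        nth_rw 1 [← conjTranspose_conjTranspose y]
        rw [sNorm_sqrt_conjTranspose_mul_self, sNorm_sqrt_conjTranspose_mul_self,
          sNorm_conjTranspose]
        ring

/-- Let `y ∈ M_k` and `n ∈ ℕ`. Then the block-diagonal matrix `y ⊗ 1ₙ ∈ M_n(M_k)`
satisfies `‖y ⊗ 1ₙ‖_{p,n} ≤ ‖y‖_p` (Schatten `p`-norm). -/
theorem stmt_16 {k : ℕ} (n : ℕ) (p : ℝ) (hp : 1 ≤ p)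
    (y : Matrix (Fin k) (Fin k) ℂ) :
    blockNorm p (y ⊗ₖ (1 : Matrix (Fin n) (Fin n) ℂ)) ≤ sNorm p y :=
  stmt_16_general n p y
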